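/- arXiv:2510.01063 — 3 statements merged into one kernel-verified Lean document; each statement's English description precedes it below -/
import Mathlib

section
/- In an (n,k) linear binary code, every minimal codeword has weight at most n - k + 1, where a codeword c is minimal if no nonzero codeword c' ≠ c has support strictly contained in the support of c. -/
/-- Ashikhmin–Barg bound: in an `(n,k)` linear binary code, every minimal codeword
has weight at most `n - k + 1`. -/
theorem stmt3 (n k : ℕ) (C : Submodule (ZMod 2) (Fin n → ZMod 2))
    (hdim : Module.finrank (ZMod 2) C = k)
    (c : Fin n → ZMod 2) (hc : c ∈ C) (hc0 : c ≠ 0)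
    (hmin : ∀ c' ∈ C, c' ≠ 0 → Function.support c' ⊆ Function.support c → c' = c) :
    (Finset.univ.filter (fun i => c i ≠ 0)).card ≤ n - k + 1 := by
  classical
  -- pick i0 with c i0 ≠ 0
  obtain ⟨i0, hi0⟩ : ∃ i, c i ≠ 0 := by
    by_contra h
    push_neg at h
    exact hc0 (funext fun i => h i)
  set w : ℕ := (Finset.univ.filter (fun i => c i ≠ 0)).card with hw
  set S : Finset (Fin n) := insert i0 (Finset.univ.filter (fun i => c i = 0)) with hS
  have hi0S : i0 ∉ Finset.univ.filter (fun i => c i = 0) := by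
    simp [hi0]
  have hcardS : S.card = (n - w) + 1 := by
    have h1 : S.card = (Finset.univ.filter (fun i => c i = 0)).card + 1 := by
      rw [hS, Finset.card_insert_of_notMem hi0S]
    have h2 : (Finset.univ.filter (fun i => c i = 0)).card + w = n := by
      have := Finset.card_filter_add_card_filter_not
        (s := (Finset.univ : Finset (Fin n))) (p := fun i => c i = 0)
      simpa [hw, Finset.card_univ] using this
    omega
  -- the restriction map to S is injective on C
  let L : C →ₗ[ZMod 2] (↥S → ZMod 2) :=
    (LinearMap.funLeft (ZMod 2) (ZMod 2) (fun s : ↥S => (s : Fin n))).comp C.subtype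
  have hLinj : Function.Injective L := by
    rw [← LinearMap.ker_eq_bot]
    rw [LinearMap.ker_eq_bot']
    intro x hx
    have hxS : ∀ i ∈ S, (x : Fin n → ZMod 2) i = 0 := by
      intro i hi
      have := congrFun hx ⟨i, hi⟩
      simpa [L, LinearMap.funLeft] using this
    by_contra hx0
    have hxne : (x : Fin n → ZMod 2) ≠ 0 := by
      intro h; exact hx0 (Subtype.ext h)
    have hsupp : Function.support (x : Fin n → ZMod 2) ⊆ Function.support c := by
      intro i hi
      by_contra hci
      have hci' : c i = 0 := by simpa [Function.mem_support, not_not] using hci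
      have : i ∈ S := by simp [hS, hci']
      exact hi (hxS i this)
    have := hmin (x : Fin n → ZMod 2) x.2 hxne hsupp
    have : (x : Fin n → ZMod 2) i0 = c i0 := by rw [this]
    have hz : (x : Fin n → ZMod 2) i0 = 0 := hxS i0 (by simp [hS])
    exact hi0 (by rw [← this, hz])
  have hle : k ≤ (n - w) + 1 := by
    have hfin : Module.finrank (ZMod 2) (↥S → ZMod 2) = S.card := by
      rw [Module.finrank_fintype_fun_eq_card, Fintype.card_coe]
    have := LinearMap.finrank_le_finrank_of_injective hLinj
    rw [hdim, hfin, hcardS] at this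
    exact this
  have hwn : w ≤ n := by
    have := Finset.card_filter_le (Finset.univ : Finset (Fin n)) (fun i => c i ≠ 0)
    simpa [Finset.card_univ] using this
  have hw1 : 1 ≤ w := by
    have : i0 ∈ Finset.univ.filter (fun i => c i ≠ 0) := by simp [hi0]
    have := Finset.card_pos.mpr ⟨i0, this⟩
    omega
  omega
end

section
/- Consider the 15 four-element sets B_i = {(1+i mod 15), (5+i mod 15), (55 + ((9+i) mod 15)), (55 + ((10+i) mod 15))} for i = 0,...,14, suitably encoded: each of the 60 rays 1..60 appearing in these sets appears in exactly two of them. Consequently, the collection {B_0,...,B_14} of 15 sets, in which each occurring element occurs exactly twice, admits no function f on the rays with values in {0,1} assigning exactly one value 1 to each B_i. -/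
set_option maxHeartbeats 1000000

/-- The orbit of the generator `a = {1,5,55,56}` of the 600-cell:
`B i = {(i % 15) + 1, ((4+i) % 15) + 1, 46 + (9+i) % 15, 46 + (10+i) % 15}` for
`i = 0,…,14`. Every ray occurring in these 15 bases occurs in exactly two of them,
and consequently there is no `{0,1}`-assignment giving exactly one 1 per basis. -/

theorem stmt9 :
    let B : ℕ → Finset ℕ := fun i =>
      {(i % 15) + 1, ((4 + i) % 15) + 1, 46 + (9 + i) % 15, 46 + (10 + i) % 15}
    (∀ r : ℕ, (∃ i ∈ Finset.range 15, r ∈ B i) →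
        ((Finset.range 15).filter (fun i => r ∈ B i)).card = 2) ∧
    ¬ ∃ f : ℕ → Fin 2, ∀ i ∈ Finset.range 15,
        ((B i).filter (fun r => f r = 1)).card = 1 := by
  intro B
  have part1 : ∀ r : ℕ, (∃ i ∈ Finset.range 15, r ∈ B i) →
      ((Finset.range 15).filter (fun i => r ∈ B i)).card = 2 := by
    intro r ⟨i, hi, hr⟩
    simp only [Finset.mem_range] at hi
    simp only [B, Finset.mem_insert, Finset.mem_singleton] at hr
    have h1 : 1 ≤ r := by omega
    have h2 : r ≤ 60 := by omega
    simp only [B]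
    interval_cases r <;> first | omega | decide
  refine ⟨part1, ?_⟩
  rintro ⟨f, hf⟩
  have hsub : ∀ i ∈ Finset.range 15, B i ⊆ Finset.Icc 1 60 := by
    intro i hi r hr
    simp only [Finset.mem_range] at hi
    simp only [B, Finset.mem_insert, Finset.mem_singleton] at hr
    simp only [Finset.mem_Icc]; omega
  have hsum : ∑ i ∈ Finset.range 15, ((B i).filter (fun r => f r = 1)).card = 15 := by
    rw [Finset.sum_congr rfl hf]; simp
  have hrepr : ∀ i ∈ Finset.range 15,
      (B i).filter (fun r => f r = 1)
        = (Finset.Icc 1 60).filter (fun r => r ∈ B i ∧ f r = 1) := by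
    intro i hi
    ext r
    simp only [Finset.mem_filter]
    constructor
    · rintro ⟨h1, h2⟩; exact ⟨hsub i hi h1, h1, h2⟩
    · rintro ⟨_, h1, h2⟩; exact ⟨h1, h2⟩
  have hswap : ∑ i ∈ Finset.range 15, ((B i).filter (fun r => f r = 1)).card
      = ∑ r ∈ Finset.Icc 1 60,
          ((Finset.range 15).filter (fun i => r ∈ B i ∧ f r = 1)).card := by
    calc ∑ i ∈ Finset.range 15, ((B i).filter (fun r => f r = 1)).card
        = ∑ i ∈ Finset.range 15, ∑ r ∈ Finset.Icc 1 60,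
            if r ∈ B i ∧ f r = 1 then 1 else 0 := by
          apply Finset.sum_congr rfl
          intro i hi
          rw [hrepr i hi, Finset.card_filter]
      _ = ∑ r ∈ Finset.Icc 1 60, ∑ i ∈ Finset.range 15,
            if r ∈ B i ∧ f r = 1 then 1 else 0 := Finset.sum_comm
      _ = ∑ r ∈ Finset.Icc 1 60,
            ((Finset.range 15).filter (fun i => r ∈ B i ∧ f r = 1)).card := by
          apply Finset.sum_congr rfl
          intro r _
          rw [Finset.card_filter]
  have heven : ∀ r ∈ Finset.Icc 1 60,
      2 ∣ ((Finset.range 15).filter (fun i => r ∈ B i ∧ f r = 1)).card := by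
    intro r _
    by_cases hfr : f r = 1
    · by_cases hex : ∃ i ∈ Finset.range 15, r ∈ B i
      · have heq : (Finset.range 15).filter (fun i => r ∈ B i ∧ f r = 1)
            = (Finset.range 15).filter (fun i => r ∈ B i) := by
          apply Finset.filter_congr
          intro i _
          simp [hfr]
        rw [heq, part1 r hex]
      · push_neg at hex
        have hemp : (Finset.range 15).filter (fun i => r ∈ B i ∧ f r = 1) = ∅ := by
          apply Finset.filter_false_of_mem
          intro i hi
          simp [hex i hi]
        rw [hemp]; simp
    · have hemp : (Finset.range 15).filter (fun i => r ∈ B i ∧ f r = 1) = ∅ := by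
        apply Finset.filter_false_of_mem
        intro i _
        simp [hfr]
      rw [hemp]; simp
  have hdvd : 2 ∣ ∑ r ∈ Finset.Icc 1 60,
      ((Finset.range 15).filter (fun i => r ∈ B i ∧ f r = 1)).card :=
    Finset.dvd_sum heven
  rw [← hswap, hsum] at hdvd
  omega
end

section
/- Let M be a matrix over GF(2) with rows indexed by pentadecagons and columns indexed by generators, where M_{i,j} counts (mod 2) the occurrences of pentadecagon i in the profile of generator j. If x ∈ GF(2)^n satisfies Mx = 0 and has odd weight, then the collection of bases that is the union of the orbits of the generators in the support of x is an odd-sized collection in which every ray occurs an even number of times. -/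
/-- Rays are `Fin m × Fin 15` (pentadecagon, position); generator `j` has an
orbit of 15 bases `Orb j 0, …, Orb j 14`, and each ray of pentadecagon `i`
occurs in exactly `N i j` of them, where `M i j = N i j (mod 2)`.  If
`x ∈ GF(2)^n` lies in the null space of `M` and has odd weight, then the
collection `P` of bases from the orbits of the generators in the support of `x`
has odd size and every ray occurs an even number of times in it. -/
theorem stmt16 {m n : ℕ} (N : Fin m → Fin n → ℕ)
    (Orb : Fin n → Fin 15 → Finset (Fin m × Fin 15))
    (hcount : ∀ j : Fin n, ∀ i : Fin m, ∀ p : Fin 15,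
      ((Finset.univ.filter (fun q : Fin 15 => (i, p) ∈ Orb j q)).card) = N i j)
    (x : Fin n → ZMod 2)
    (hnull : ∀ i : Fin m, ∑ j, (N i j : ZMod 2) * x j = 0)
    (hodd : Odd (Finset.univ.filter (fun j => x j ≠ 0)).card) :
    let P : Finset (Fin n × Fin 15) := Finset.univ.filter (fun p => x p.1 ≠ 0)
    Odd P.card ∧
    ∀ r : Fin m × Fin 15, Even ((P.filter (fun p => r ∈ Orb p.1 p.2)).card) := by
  intro P
  set S : Finset (Fin n) := Finset.univ.filter (fun j => x j ≠ 0) with hS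
  have hPeq : P = S ×ˢ (Finset.univ : Finset (Fin 15)) := by
    ext p
    simp [P, hS, Finset.mem_product]
  have hx1 : ∀ j ∈ S, x j = 1 := by
    intro j hj
    have hne : x j ≠ 0 := by simpa [hS] using hj
    have h2 : ∀ a : ZMod 2, a ≠ 0 → a = 1 := by decide
    exact h2 _ hne
  constructor
  · rw [hPeq, Finset.card_product]
    simp only [Finset.card_univ, Fintype.card_fin]
    obtain ⟨k, hk⟩ := hodd
    exact ⟨15 * k + 7, by omega⟩
  · rintro ⟨i, p⟩
    have hcard : (P.filter (fun q => (i, p) ∈ Orb q.1 q.2)).card = ∑ j ∈ S, N i j := by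
      rw [hPeq, Finset.card_filter, Finset.sum_product]
      refine Finset.sum_congr rfl fun j _ => ?_
      rw [← hcount j i p, Finset.card_filter]
    rw [hcard]
    have hz : ((∑ j ∈ S, N i j : ℕ) : ZMod 2) = 0 := by
      push_cast
      calc (∑ j ∈ S, (N i j : ZMod 2)) = ∑ j ∈ S, (N i j : ZMod 2) * x j :=
            Finset.sum_congr rfl fun j hj => by rw [hx1 j hj, mul_one]
        _ = ∑ j, (N i j : ZMod 2) * x j := by
            refine Finset.sum_subset (Finset.subset_univ _) fun j _ hj => ?_
            have : x j = 0 := by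
              by_contra h
              exact hj (by simp [hS, h])
            simp [this]
        _ = 0 := hnull i
    have := (ZMod.natCast_eq_zero_iff _ 2).mp hz
    exact (even_iff_two_dvd).mpr this
end
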